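/- Let λ > 1 and let h_λ be the conjugacy satisfying F_λ ∘ h_λ = h_λ ∘ F_{λ₀}, depending holomorphically/differentiably on λ, with ∂h_λ/∂λ uniformly bounded and |(F_λ^n)'| ≥ K(1+α)^n on the Julia set for some K, α > 0. Then for every z, ∂h_λ(z)/∂λ = (1 − 1/λ) · Σ_{k=1}^∞ 1/(F_λ^k)'(h_λ(z)) − 1/λ, where the series converges absolutely. -/

import Mathlib

open Finset

/-- The exponential family `f_λ(z) = λ(e^z − 1)` (acting on the cylinder, where it has
the same formula). -/
noncomputable def expMap (lam : ℝ) (z : ℂ) : ℂ := lam * (Complex.exp z - 1)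

/-- Derivative of the `k`-th iterate of `expMap lam` at `z`:
`(F_λ^k)'(z) = ∏_{j<k} λ e^{F_λ^j(z)}`. -/
noncomputable def iterDeriv (lam : ℝ) (k : ℕ) (z : ℂ) : ℂ :=
  ∏ j ∈ Finset.range k, ((lam : ℂ) * Complex.exp ((expMap lam)^[j] z))

/-!
Differentiating `h_λ ∘ F_{λ₀} = F_λ ∘ h_λ` in `λ` gives, along the orbit `z_n = F_{λ₀}^n z`,
`d_{n+1} = (e^{w_n} − 1) + λ e^{w_n} d_n` with `d_n = ∂_λ h_λ(z_n)` and `w_n = h_λ(z_n)`.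
Dividing by `(F_λ^{n+1})'(h_λ z) = (F_λ^n)'(h_λ z) · λ e^{w_n}` and writing
`a_n = 1/(F_λ^n)'(h_λ z)`, this becomes the telescoping identity
`a_n d_n − a_{n+1} d_{n+1} = a_{n+1} − a_n / λ`.
Expansion makes `a_n` geometrically small, so `a_n d_n → 0` since `d_n` is bounded, and summing
gives `d_0 = Σ_{k≥1} a_k − (1 + Σ_{k≥1} a_k)/λ`.
-/

open Filter Topology

theorem tendsto_sum_range_sub_succ {G : Type*} [AddCommGroup G] [TopologicalSpace G]
    [IsTopologicalAddGroup G] {u : ℕ → G} (hu : Tendsto u atTop (𝓝 0)) :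
    Tendsto (fun N => ∑ n ∈ range N, (u n - u (n + 1))) atTop (𝓝 (u 0)) := by
  simp_rw [sum_range_sub']
  simpa using tendsto_const_nhds.sub hu

theorem summable_norm_inv_of_geometric_le {𝕜 : Type*} [NormedDivisionRing 𝕜] {b : ℕ → 𝕜}
    {C α : ℝ} (hC : 0 < C) (hα : 0 < α) (hb : ∀ n, C * (1 + α) ^ n ≤ ‖b n‖) :
    Summable fun n => ‖(b n)⁻¹‖ := by
  have hr : (1 + α)⁻¹ < 1 := inv_lt_one_of_one_lt₀ (by linarith)
  refine (summable_geometric_of_lt_one (by positivity) hr |>.mul_left C⁻¹).of_nonneg_of_le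
    (fun n => norm_nonneg _) fun n => ?_
  rw [norm_inv, inv_pow, ← mul_inv]
  exact inv_anti₀ (by positivity) (hb n)

theorem eq_of_telescoping {𝕜 : Type*} [NormedField 𝕜] {a d : ℕ → 𝕜} {c : 𝕜}
    {K : ℝ} (ha : Summable a) (ha0 : a 0 = 1) (hd : ∀ n, ‖d n‖ ≤ K)
    (hrec : ∀ n, a n * d n - a (n + 1) * d (n + 1) = a (n + 1) - a n / c) :
    d 0 = (1 - 1 / c) * ∑' k, a (k + 1) - 1 / c := by
  have had : Tendsto (fun n => a n * d n) atTop (𝓝 0) :=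
    ha.tendsto_atTop_zero.zero_mul_isBoundedUnder_le
      (isBoundedUnder_of ⟨K, fun n => by simpa using hd n⟩)
  have hlim : Tendsto (fun N => ∑ n ∈ range N, (a (n + 1) - a n / c)) atTop
      (𝓝 (∑' k, a (k + 1) - (∑' k, a k) / c)) :=
    (((summable_nat_add_iff 1).2 ha).hasSum.sub (ha.hasSum.div_const c)).tendsto_sum_nat
  simp_rw [← hrec] at hlim
  have h0 := tendsto_nhds_unique (tendsto_sum_range_sub_succ had) hlim
  rw [ha.tsum_eq_zero_add, ha0, one_mul] at h0
  rw [h0]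
  ring

theorem semiconj_iterate_of_mapsTo {α β : Type*} {f : α → α} {g : β → β} {φ : α → β}
    {s : Set α} (hs : Set.MapsTo f s s) (h : ∀ x ∈ s, g (φ x) = φ (f x)) (n : ℕ) :
    ∀ x ∈ s, g^[n] (φ x) = φ (f^[n] x) := by
  induction n with
  | zero => simp
  | succ n ih =>
    intro x hx
    rw [Function.iterate_succ_apply', Function.iterate_succ_apply', ih x hx,
      h _ (hs.iterate n hx)]

theorem hasDerivAt_expMap_param {g : ℝ → ℂ} {g' : ℂ} {lam : ℝ} (hg : HasDerivAt g g' lam) :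
    HasDerivAt (fun μ => expMap μ (g μ))
      (Complex.exp (g lam) - 1 + lam * Complex.exp (g lam) * g') lam := by
  refine ((hasDerivAt_id lam).ofReal_comp.mul (hg.cexp.sub_const 1)).congr_deriv ?_
  simp only [id_eq, Complex.ofReal_one]
  ring

theorem iterDeriv_zero (lam : ℝ) (z : ℂ) : iterDeriv lam 0 z = 1 := prod_range_zero _

theorem iterDeriv_succ (lam : ℝ) (n : ℕ) (z : ℂ) :
    iterDeriv lam (n + 1) z =
      iterDeriv lam n z * (lam * Complex.exp ((expMap lam)^[n] z)) :=
  prod_range_succ _ n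

theorem iterDeriv_ne_zero {lam : ℝ} (hlam : lam ≠ 0) (n : ℕ) (z : ℂ) : iterDeriv lam n z ≠ 0 :=
  prod_ne_zero_iff.2 fun _ _ => mul_ne_zero (Complex.ofReal_ne_zero.2 hlam) (Complex.exp_ne_zero _)

theorem inv_iterDeriv_mul_sub {lam : ℝ} (hlam : lam ≠ 0) (n : ℕ) (z d d' : ℂ)
    (hd' : d' = Complex.exp ((expMap lam)^[n] z) - 1 +
      lam * Complex.exp ((expMap lam)^[n] z) * d) :
    (iterDeriv lam n z)⁻¹ * d - (iterDeriv lam (n + 1) z)⁻¹ * d' =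
      (iterDeriv lam (n + 1) z)⁻¹ - (iterDeriv lam n z)⁻¹ / lam := by
  have hP := iterDeriv_ne_zero hlam n z
  have hlamC : (lam : ℂ) ≠ 0 := Complex.ofReal_ne_zero.2 hlam
  have hE := Complex.exp_ne_zero ((expMap lam)^[n] z)
  rw [hd', iterDeriv_succ]
  field_simp
  ring

theorem stmt7_general (lam₀ lam : ℝ) (hl : 1 < lam)
    (J : Set ℂ) (h : ℝ → ℂ → ℂ) (dh : ℂ → ℂ)
    (hJinv : ∀ z ∈ J, expMap lam₀ z ∈ J)
    (hconj : ∀ μ ∈ Set.Ioi (1 : ℝ), ∀ z ∈ J, expMap μ (h μ z) = h μ (expMap lam₀ z))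
    (hdiff : ∀ z ∈ J, HasDerivAt (fun μ : ℝ => h μ z) (dh z) lam)
    (K : ℝ) (hbdd : ∀ z ∈ J, ‖dh z‖ ≤ K)
    (C α : ℝ) (hC : 0 < C) (hα : 0 < α)
    (hlow : ∀ n : ℕ, ∀ z ∈ J, C * (1 + α) ^ n ≤ ‖iterDeriv lam n (h lam z)‖) :
    ∀ z ∈ J,
      Summable (fun k : ℕ => ‖(iterDeriv lam (k + 1) (h lam z))⁻¹‖) ∧
      dh z = (1 - 1 / (lam : ℂ)) * ∑' k : ℕ, (iterDeriv lam (k + 1) (h lam z))⁻¹ -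
        1 / (lam : ℂ) := by
  intro z hz
  have hlam : lam ≠ 0 := (zero_lt_one.trans hl).ne'
  have hJ : Set.MapsTo (expMap lam₀) J J := hJinv
  have hparam : ∀ y ∈ J, dh (expMap lam₀ y) =
      Complex.exp (h lam y) - 1 + lam * Complex.exp (h lam y) * dh y := fun y hy =>
    (hdiff _ (hJ hy)).unique <| (hasDerivAt_expMap_param (hdiff y hy)).congr_of_eventuallyEq <|
      eventually_of_mem (Ioi_mem_nhds hl) fun μ hμ => (hconj μ hμ y hy).symm
  have hsum := summable_norm_inv_of_geometric_le hC hα fun n => hlow n z hz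
  refine ⟨(summable_nat_add_iff 1).2 hsum, ?_⟩
  refine eq_of_telescoping (d := fun n => dh ((expMap lam₀)^[n] z)) hsum.of_norm
    (by rw [iterDeriv_zero, inv_one]) (fun n => hbdd _ (hJ.iterate n hz)) fun n => ?_
  refine inv_iterDeriv_mul_sub hlam n _ _ _ ?_
  rw [semiconj_iterate_of_mapsTo hJ (hconj lam hl) n z hz, Function.iterate_succ_apply']
  exact hparam _ (hJ.iterate n hz)

/-- derivative of the conjugacy in the parameter. Under the conjugacy
relation `F_λ ∘ h_λ = h_λ ∘ F_{λ₀}` on the Julia set `J` of `F_{λ₀}`, differentiability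
in `λ` with uniformly bounded derivative, and the expansion bound
`|(F_λ^n)'| ≥ C(1+α)^n` along the conjugated orbit, one has
`∂h_λ(z)/∂λ = (1 − 1/λ) Σ_{k≥1} 1/(F_λ^k)'(h_λ(z)) − 1/λ`, the series converging
absolutely. -/
theorem stmt7 (lam₀ lam : ℝ) (h₀ : 1 < lam₀) (hl : 1 < lam)
    (J : Set ℂ) (h : ℝ → ℂ → ℂ) (dh : ℂ → ℂ)
    (hJinv : ∀ z ∈ J, expMap lam₀ z ∈ J)
    (hconj : ∀ μ ∈ Set.Ioi (1 : ℝ), ∀ z ∈ J, expMap μ (h μ z) = h μ (expMap lam₀ z))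
    (hdiff : ∀ z ∈ J, HasDerivAt (fun μ : ℝ => h μ z) (dh z) lam)
    (K : ℝ) (hK : 0 < K) (hbdd : ∀ z ∈ J, ‖dh z‖ ≤ K)
    (C α : ℝ) (hC : 0 < C) (hα : 0 < α)
    (hlow : ∀ n : ℕ, ∀ z ∈ J, C * (1 + α) ^ n ≤ ‖iterDeriv lam n (h lam z)‖) :
    ∀ z ∈ J,
      Summable (fun k : ℕ => ‖(iterDeriv lam (k + 1) (h lam z))⁻¹‖) ∧
      dh z = (1 - 1 / (lam : ℂ)) * ∑' k : ℕ, (iterDeriv lam (k + 1) (h lam z))⁻¹ -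
        1 / (lam : ℂ) :=
  stmt7_general lam₀ lam hl J h dh hJinv hconj hdiff K hbdd C α hC hα hlow
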